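/- Fix Θ₁, Θ₂, Θ₃ ∈ [0, π) with Θ₁ + Θ₂ + Θ₃ < π, fix i ∈ {1,2,3} with {j,k} = {1,2,3} \ {i}, and fix positive numbers a, b. Then ϑᵢ(r₁, r₂, r₃) → π − Θᵢ as (rᵢ, rⱼ, rₖ) → (0, a, b) with all coordinates staying positive. -/
import Mathlib


/-- The inverse hyperbolic cosine: `arcosh x = log (x + √(x² − 1))` for `x ≥ 1`. -/
noncomputable def arcosh (x : ℝ) : ℝ := Real.log (x + Real.sqrt (x ^ 2 - 1))

/-- The hyperbolic distance `dₖ` between the centers of two hyperbolic disks of radii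
`r (k+1)`, `r (k+2)` meeting at exterior intersection angle `Θ k` (hyperbolic cosine law). -/
noncomputable def dist3 (Θ r : Fin 3 → ℝ) (k : Fin 3) : ℝ :=
  arcosh (Real.cosh (r (k + 1)) * Real.cosh (r (k + 2)) +
    Real.cos (Θ k) * Real.sinh (r (k + 1)) * Real.sinh (r (k + 2)))

/-- The inner angle `ϑᵢ` at the `i`-th vertex of the hyperbolic triangle of centers of a
three-circle configuration, by the hyperbolic law of cosines. -/
noncomputable def theta3 (Θ r : Fin 3 → ℝ) (i : Fin 3) : ℝ :=
  Real.arccos ((Real.cosh (dist3 Θ r (i + 1)) * Real.cosh (dist3 Θ r (i + 2)) -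
      Real.cosh (dist3 Θ r i)) /
    (Real.sinh (dist3 Θ r (i + 1)) * Real.sinh (dist3 Θ r (i + 2))))

private lemma cosh_arcosh {x : ℝ} (hx : 1 ≤ x) : Real.cosh (arcosh x) = x := by
  have hs : Real.sqrt (x ^ 2 - 1) ^ 2 = x ^ 2 - 1 := Real.sq_sqrt (by nlinarith)
  have hnn : 0 ≤ Real.sqrt (x ^ 2 - 1) := Real.sqrt_nonneg _
  have hpos : 0 < x + Real.sqrt (x ^ 2 - 1) := by linarith
  rw [arcosh, Real.cosh_eq, Real.exp_log hpos, Real.exp_neg, Real.exp_log hpos]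
  field_simp
  nlinarith [hs]

private lemma sinh_arcosh {x : ℝ} (hx : 1 ≤ x) :
    Real.sinh (arcosh x) = Real.sqrt (x ^ 2 - 1) := by
  have hs : Real.sqrt (x ^ 2 - 1) ^ 2 = x ^ 2 - 1 := Real.sq_sqrt (by nlinarith)
  have hnn : 0 ≤ Real.sqrt (x ^ 2 - 1) := Real.sqrt_nonneg _
  have hpos : 0 < x + Real.sqrt (x ^ 2 - 1) := by linarith
  rw [arcosh, Real.sinh_eq, Real.exp_log hpos, Real.exp_neg, Real.exp_log hpos]
  field_simp
  nlinarith [hs]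

private lemma continuousAt_arcosh {x : ℝ} (hx : 1 < x) : ContinuousAt arcosh x := by
  have hnn : 0 ≤ Real.sqrt (x ^ 2 - 1) := Real.sqrt_nonneg _
  have hpos : 0 < x + Real.sqrt (x ^ 2 - 1) := by linarith
  have hg : ContinuousAt (fun y : ℝ => y + Real.sqrt (y ^ 2 - 1)) x := by fun_prop
  unfold arcosh
  exact hg.log hpos.ne'

open Filter Topology in
theorem three_circle_angle_tendsto_pi_sub
    (Θ : Fin 3 → ℝ)
    (hΘ : ∀ τ, Θ τ ∈ Set.Ico 0 Real.pi)
    (hsum : Θ 0 + Θ 1 + Θ 2 < Real.pi)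
    (i : Fin 3) (a b : ℝ) (ha : 0 < a) (hb : 0 < b) :
    Tendsto (fun r : Fin 3 → ℝ => theta3 Θ r i)
      (𝓝[{r : Fin 3 → ℝ | ∀ τ, 0 < r τ}]
        (fun τ => if τ = i then 0 else if τ = i + 1 then a else b))
      (𝓝 (Real.pi - Θ i)) := by
  have f1 : ∀ j : Fin 3, j + 1 ≠ j := by decide
  have f2 : ∀ j : Fin 3, j + 2 ≠ j := by decide
  have f3 : ∀ j : Fin 3, j + 2 ≠ j + 1 := by decide
  have g1 : ∀ j : Fin 3, j + 1 + 1 = j + 2 := by decide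
  have g2 : ∀ j : Fin 3, j + 1 + 2 = j := by decide
  have g3 : ∀ j : Fin 3, j + 2 + 1 = j := by decide
  have g4 : ∀ j : Fin 3, j + 2 + 2 = j + 1 := by decide
  set p : Fin 3 → ℝ := fun τ => if τ = i then 0 else if τ = i + 1 then a else b with hp
  have hpi : p i = 0 := if_pos rfl
  have hpj : p (i + 1) = a := by
    show (if i + 1 = i then (0:ℝ) else if i + 1 = i + 1 then a else b) = a
    rw [if_neg (f1 i), if_pos rfl]
  have hpk : p (i + 2) = b := by
    show (if i + 2 = i then (0:ℝ) else if i + 2 = i + 1 then a else b) = b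
    rw [if_neg (f2 i), if_neg (f3 i)]
  have hsa : 0 < Real.sinh a := Real.sinh_pos_iff.mpr ha
  have hsb : 0 < Real.sinh b := Real.sinh_pos_iff.mpr hb
  have hcb : 1 < Real.cosh b := Real.one_lt_cosh.mpr hb.ne'
  have hca : 1 < Real.cosh a := Real.one_lt_cosh.mpr ha.ne'
  have hcosΘ : -1 < Real.cos (Θ i) := by
    have := Real.strictAntiOn_cos ⟨(hΘ i).1, (hΘ i).2.le⟩
      ⟨Real.pi_nonneg, le_refl _⟩ (hΘ i).2
    rwa [Real.cos_pi] at this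
  -- the argument of arcosh in dist3
  set F : Fin 3 → (Fin 3 → ℝ) → ℝ := fun k r =>
    Real.cosh (r (k + 1)) * Real.cosh (r (k + 2)) +
      Real.cos (Θ k) * Real.sinh (r (k + 1)) * Real.sinh (r (k + 2)) with hF
  have hFi : F i p = Real.cosh a * Real.cosh b +
      Real.cos (Θ i) * Real.sinh a * Real.sinh b := by
    simp only [hF, hpj, hpk]
  have hFj : F (i + 1) p = Real.cosh b := by
    simp only [hF, g1, g2, hpi, hpk, Real.cosh_zero, Real.sinh_zero, mul_one, mul_zero, add_zero]
  have hFk : F (i + 2) p = Real.cosh a := by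
    simp only [hF, g3, g4, hpi, hpj, Real.cosh_zero, Real.sinh_zero, mul_zero, zero_mul, add_zero]
    ring
  have hX1 : 1 < F i p := by
    rw [hFi]
    nlinarith [Real.cosh_sub a b, Real.one_le_cosh (a - b), mul_pos hsa hsb, hcosΘ]
  have hFj1 : 1 < F (i + 1) p := by rw [hFj]; exact hcb
  have hFk1 : 1 < F (i + 2) p := by rw [hFk]; exact hca
  -- continuity of dist3 at p
  have hFc : ∀ k : Fin 3, ContinuousAt (F k) p := by
    intro k
    apply ContinuousAt.add
    · exact ((Real.continuous_cosh.comp (continuous_apply (k + 1))).mul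
        (Real.continuous_cosh.comp (continuous_apply (k + 2)))).continuousAt
    · exact (((continuous_const.mul
        (Real.continuous_sinh.comp (continuous_apply (k + 1)))).mul
        (Real.continuous_sinh.comp (continuous_apply (k + 2)))).continuousAt)
  have hdc : ∀ k : Fin 3, 1 < F k p → ContinuousAt (fun r => dist3 Θ r k) p := by
    intro k hk
    exact (continuousAt_arcosh hk).comp (hFc k)
  have hdist_eq : ∀ (r : Fin 3 → ℝ) (k : Fin 3), dist3 Θ r k = arcosh (F k r) := by
    intro r k; rfl
  -- values of cosh/sinh of dist3 at p
  have hcoshdi : Real.cosh (dist3 Θ p i) = F i p := by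
    rw [hdist_eq]; exact cosh_arcosh hX1.le
  have hcoshdj : Real.cosh (dist3 Θ p (i + 1)) = Real.cosh b := by
    rw [hdist_eq, hFj]; exact cosh_arcosh hcb.le
  have hcoshdk : Real.cosh (dist3 Θ p (i + 2)) = Real.cosh a := by
    rw [hdist_eq, hFk]; exact cosh_arcosh hca.le
  have hsinhdj : Real.sinh (dist3 Θ p (i + 1)) = Real.sinh b := by
    rw [hdist_eq, hFj, sinh_arcosh hcb.le]
    rw [show Real.cosh b ^ 2 - 1 = Real.sinh b ^ 2 by nlinarith [Real.cosh_sq b]]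
    exact Real.sqrt_sq hsb.le
  have hsinhdk : Real.sinh (dist3 Θ p (i + 2)) = Real.sinh a := by
    rw [hdist_eq, hFk, sinh_arcosh hca.le]
    rw [show Real.cosh a ^ 2 - 1 = Real.sinh a ^ 2 by nlinarith [Real.cosh_sq a]]
    exact Real.sqrt_sq hsa.le
  -- continuity of theta3 at p
  have hden : Real.sinh (dist3 Θ p (i + 1)) * Real.sinh (dist3 Θ p (i + 2)) ≠ 0 := by
    rw [hsinhdj, hsinhdk]; positivity
  have hct : ContinuousAt (fun r => theta3 Θ r i) p := by
    apply Real.continuous_arccos.continuousAt.comp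
    apply ContinuousAt.div
    · exact (((Real.continuous_cosh.continuousAt.comp (hdc _ hFj1)).mul
        (Real.continuous_cosh.continuousAt.comp (hdc _ hFk1))).sub
        (Real.continuous_cosh.continuousAt.comp (hdc _ hX1)))
    · exact ((Real.continuous_sinh.continuousAt.comp (hdc _ hFj1)).mul
        (Real.continuous_sinh.continuousAt.comp (hdc _ hFk1)))
    · exact hden
  -- value at p
  have hval : theta3 Θ p i = Real.pi - Θ i := by
    rw [theta3, hcoshdj, hcoshdk, hcoshdi, hsinhdj, hsinhdk, hFi]
    have : (Real.cosh b * Real.cosh a -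
        (Real.cosh a * Real.cosh b + Real.cos (Θ i) * Real.sinh a * Real.sinh b)) /
        (Real.sinh b * Real.sinh a) = -Real.cos (Θ i) := by
      field_simp
      ring
    rw [this, ← Real.cos_pi_sub, Real.arccos_cos (by linarith [(hΘ i).2])
      (by linarith [(hΘ i).1])]
  have htend : Tendsto (fun r => theta3 Θ r i)
      (𝓝[{r : Fin 3 → ℝ | ∀ τ, 0 < r τ}] p) (𝓝 (theta3 Θ p i)) :=
    hct.tendsto.mono_left nhdsWithin_le_nhds
  rw [hval] at htend
  exact htend
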